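/- arXiv:2304.11653 — 4 statements merged into one kernel-verified Lean document; each statement's English description precedes it below -/
import Mathlib

section
/- Let m ≥ 1 be a natural number and define the sequence θ : ℕ → ℝ by θ_1 = 1/m and θ_{k+1} = (√(θ_k^4 + 4 θ_k^2) − θ_k^2)/2 for all k ≥ 1. Then for every k ≥ 1 one has the lower bound θ_k ≥ 1/(k − 1 + 2m). -/
/-! By induction, θ_k ≥ 1/c_k with c_k = k − 1 + 2m. For c_k > 0 the bound θ_k c_k ≥ 1
forces θ_k² c_k (c_k + 1) ≥ 1, which is exactly what makes θ_k² + 2/(c_k + 1) ≤ √(θ_k⁴ + 4θ_k²),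
that is θ_{k+1} ≥ 1/(c_k + 1). -/

lemma one_div_add_one_le_asbcds_step {t c : ℝ} (hc : 0 < c) (ht : 1 / c ≤ t) :
    1 / (c + 1) ≤ (Real.sqrt (t ^ 4 + 4 * t ^ 2) - t ^ 2) / 2 := by
  have htc : 1 ≤ t * c := by rwa [div_le_iff₀ hc] at ht
  have hkey : 1 ≤ t ^ 2 * c * (c + 1) := by nlinarith
  set u := 1 / (c + 1) with hu_def
  have hu : u * (c + 1) = 1 := by rw [hu_def]; field_simp
  have hgap : 0 ≤ t ^ 2 * (1 - u) - u ^ 2 := by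
    have hsplit : u ^ 2 * (t ^ 2 * c * (c + 1) - 1) = t ^ 2 * (1 - u) - u ^ 2 := by
      linear_combination t ^ 2 * (u * c + 1) * hu
    rw [← hsplit]
    exact mul_nonneg (sq_nonneg u) (by linarith)
  have hsqrt : t ^ 2 + 2 * u ≤ Real.sqrt (t ^ 4 + 4 * t ^ 2) := by
    rw [Real.le_sqrt (by positivity) (by positivity)]
    linarith [show t ^ 4 + 4 * t ^ 2 - (t ^ 2 + 2 * u) ^ 2 = 4 * (t ^ 2 * (1 - u) - u ^ 2) by ring]
  linarith

/-- For the ASBCDS step-size sequence θ with θ₁ = 1/m and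
θ_{k+1} = (√(θ_k⁴ + 4θ_k²) − θ_k²)/2 (m ≥ 1), for every k ≥ 1 one has
θ_k ≥ 1/(k − 1 + 2m). -/
theorem asbcds_theta_lower_bound (m : ℕ) (hm : 1 ≤ m) (θ : ℕ → ℝ)
    (hθ1 : θ 1 = 1 / m)
    (hθrec : ∀ k, 1 ≤ k →
      θ (k + 1) = (Real.sqrt (θ k ^ 4 + 4 * θ k ^ 2) - θ k ^ 2) / 2) :
    ∀ k, 1 ≤ k → θ k ≥ 1 / ((k : ℝ) - 1 + 2 * m) := by
  have hm' : (1 : ℝ) ≤ m := by exact_mod_cast hm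
  intro k hk
  induction k, hk using Nat.le_induction with
  | base =>
    rw [hθ1, Nat.cast_one, sub_self, zero_add]
    exact one_div_le_one_div_of_le (by positivity) (by linarith)
  | succ k hk ih =>
    have hk' : (1 : ℝ) ≤ k := by exact_mod_cast hk
    rw [hθrec k hk, Nat.cast_succ, show (k : ℝ) + 1 - 1 + 2 * m = (k - 1 + 2 * m) + 1 by ring]
    exact one_div_add_one_le_asbcds_step (by linarith) ih
end

section
/- Let m ≥ 1 be a natural number and define the sequence θ : ℕ → ℝ by θ_1 = 1/m and θ_{k+1} = (√(θ_k^4 + 4 θ_k^2) − θ_k^2)/2 for all k ≥ 1. Then for every k ≥ 1 one has the upper bound θ_k ≤ 2/(k − 1 + 2m). -/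
/-! The step `s` computed from `t` is the positive root of `s² + s t² = t²`. In reciprocals
`u = 1/s`, `v = 1/t` this reads `u² - u = v²`, i.e. `(u - 1/2)² = v² + 1/4 > v²`, so `1/θ_k` grows
by at least `1/2` per step. Starting from `1/θ₁ = m` this gives `1/θ_k ≥ m + (k - 1)/2`. -/

noncomputable def asbcdsStep (t : ℝ) : ℝ := (√(t ^ 4 + 4 * t ^ 2) - t ^ 2) / 2

lemma asbcdsStep_sq_add_mul (t : ℝ) : asbcdsStep t ^ 2 + asbcdsStep t * t ^ 2 = t ^ 2 := by
  have h : √(t ^ 4 + 4 * t ^ 2) ^ 2 = t ^ 4 + 4 * t ^ 2 := Real.sq_sqrt (by positivity)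
  unfold asbcdsStep
  linear_combination h / 4

lemma asbcdsStep_nonneg (t : ℝ) : 0 ≤ asbcdsStep t := by
  have : t ^ 2 ≤ √(t ^ 4 + 4 * t ^ 2) := Real.le_sqrt_of_sq_le (by nlinarith [sq_nonneg t])
  unfold asbcdsStep
  linarith

lemma asbcdsStep_pos {t : ℝ} (ht : t ≠ 0) : 0 < asbcdsStep t := by
  refine (asbcdsStep_nonneg t).lt_of_ne' fun h0 => ht ?_
  simpa [h0] using (asbcdsStep_sq_add_mul t).symm

lemma inv_add_half_le_inv_asbcdsStep {t : ℝ} (ht : 0 < t) :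
    t⁻¹ + 1 / 2 ≤ (asbcdsStep t)⁻¹ := by
  have hs := asbcdsStep_pos ht.ne'
  have hrec : (asbcdsStep t)⁻¹ ^ 2 - (asbcdsStep t)⁻¹ = t⁻¹ ^ 2 := by
    have := asbcdsStep_sq_add_mul t
    field_simp
    linear_combination -this
  set u := (asbcdsStep t)⁻¹
  have hu1 : 1 < u := by nlinarith [inv_pos.2 hs, inv_pos.2 ht]
  nlinarith [inv_pos.2 ht]

/-- For the ASBCDS step-size sequence θ with θ₁ = 1/m and
θ_{k+1} = (√(θ_k⁴ + 4θ_k²) − θ_k²)/2 (m ≥ 1), for every k ≥ 1 one has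
θ_k ≤ 2/(k − 1 + 2m). -/
theorem asbcds_theta_upper_bound (m : ℕ) (hm : 1 ≤ m) (θ : ℕ → ℝ)
    (hθ1 : θ 1 = 1 / m)
    (hθrec : ∀ k, 1 ≤ k →
      θ (k + 1) = (Real.sqrt (θ k ^ 4 + 4 * θ k ^ 2) - θ k ^ 2) / 2) :
    ∀ k, 1 ≤ k → θ k ≤ 2 / ((k : ℝ) - 1 + 2 * m) := by
  have hm' : (1 : ℝ) ≤ m := by exact_mod_cast hm
  have hinv_growth : ∀ k, 1 ≤ k → 0 < θ k ∧ ((k : ℝ) - 1 + 2 * m) / 2 ≤ (θ k)⁻¹ := by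
    intro k hk
    induction k, hk using Nat.le_induction with
    | base =>
      rw [hθ1, one_div, inv_inv]
      exact ⟨inv_pos.2 (by linarith), by push_cast; linarith⟩
    | succ k hk ih =>
      obtain ⟨hpos, hinv⟩ := ih
      have hstep : θ (k + 1) = asbcdsStep (θ k) := hθrec k hk
      have hgrow := inv_add_half_le_inv_asbcdsStep hpos
      rw [hstep]
      refine ⟨asbcdsStep_pos hpos.ne', ?_⟩
      push_cast
      linarith
  intro k hk
  obtain ⟨hpos, hinv⟩ := hinv_growth k hk
  have hk' : (1 : ℝ) ≤ k := by exact_mod_cast hk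
  rw [← inv_div]
  exact (le_inv_comm₀ (by linarith) hpos).mp hinv
end

section
/- Let N be a positive integer, let W be a symmetric positive semidefinite real N × N matrix with positive semidefinite square root S = √W, let μ > 0, and let F : ℝ^N → ℝ be μ-strongly convex. Define the dual objective φ(η) = sup_{z ∈ ℝ^N} (⟨S η, z⟩ − F(z)) and assume this supremum is finite for every η. Suppose: (i) x ∈ ℝ^N attains the supremum defining φ(η) for a given η ∈ ℝ^N (i.e., ⟨S η, x⟩ − F(x) = φ(η)); (ii) x* minimizes F over the constraint set {z ∈ ℝ^N : S z = 0}; and (iii) η* minimizes φ over ℝ^N. Then ‖x − x*‖² ≤ (2/μ)(φ(η) − φ(η*)). -/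
set_option maxHeartbeats 1000000


open RealInnerProductSpace

section Aux

variable {E : Type*} [NormedAddCommGroup E] [InnerProductSpace ℝ E]

private lemma aux_combo (x z : E) (t : ℝ) :
    ‖(1 - t) • x + t • z‖ ^ 2
      = (1 - t) * ‖x‖ ^ 2 + t * ‖z‖ ^ 2 - t * (1 - t) * ‖x - z‖ ^ 2 := by
  have h1 := norm_add_sq_real ((1 - t) • x) (t • z)
  have h2 := norm_sub_sq_real x z
  have h3 : ⟪(1 - t) • x, t • z⟫ = (1 - t) * (t * ⟪x, z⟫) := by
    rw [real_inner_smul_left, real_inner_smul_right]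
  have h4 : ‖(1 - t) • x‖ ^ 2 = (1 - t) ^ 2 * ‖x‖ ^ 2 := by
    rw [norm_smul, Real.norm_eq_abs, mul_pow, sq_abs]
  have h5 : ‖t • z‖ ^ 2 = t ^ 2 * ‖z‖ ^ 2 := by
    rw [norm_smul, Real.norm_eq_abs, mul_pow, sq_abs]
  rw [h1, h3, h4, h5, h2]; ring

/-- Strong-convexity growth bound at a minimizer of `z ↦ F z - ⟪b, z⟫`. -/
private lemma strong_min {μ : ℝ} (hμ : 0 < μ) (F : E → ℝ) (b : E)
    (hF : ConvexOn ℝ Set.univ (fun z => F z - μ / 2 * ‖z‖ ^ 2))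
    {x : E} (hmin : ∀ z, F x - ⟪b, x⟫ ≤ F z - ⟪b, z⟫) (z : E) :
    F x - ⟪b, x⟫ + μ / 2 * ‖z - x‖ ^ 2 ≤ F z - ⟪b, z⟫ := by
  have key : ∀ t ∈ Set.Ioo (0:ℝ) 1,
      μ / 2 * (1 - t) * ‖z - x‖ ^ 2 ≤ (F z - ⟪b, z⟫) - (F x - ⟪b, x⟫) := by
    intro t ht
    have ha : (0:ℝ) ≤ 1 - t := by linarith [ht.2]
    have hb : (0:ℝ) ≤ t := le_of_lt ht.1
    have hc := hF.2 (Set.mem_univ x) (Set.mem_univ z) ha hb (by ring)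
    simp only [smul_eq_mul] at hc
    have hmm := hmin ((1 - t) • x + t • z)
    have hid := aux_combo x z t
    have hin : ⟪b, (1 - t) • x + t • z⟫ = (1 - t) * ⟪b, x⟫ + t * ⟪b, z⟫ := by
      rw [inner_add_right, real_inner_smul_right, real_inner_smul_right]
    have hrev : ‖z - x‖ = ‖x - z‖ := norm_sub_rev _ _
    rw [hrev]
    nlinarith [hc, hmm, hid, hin, ht.1, ht.2, mul_pos ht.1 (sub_pos.mpr ht.2)]
  have h2 : Filter.Tendsto (fun t : ℝ => μ / 2 * (1 - t) * ‖z - x‖ ^ 2)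
      (nhdsWithin 0 (Set.Ioi 0)) (nhds (μ / 2 * ‖z - x‖ ^ 2)) := by
    have hcont : Filter.Tendsto (fun t : ℝ => μ / 2 * (1 - t) * ‖z - x‖ ^ 2)
        (nhds 0) (nhds (μ / 2 * (1 - 0) * ‖z - x‖ ^ 2)) := by
      apply Continuous.tendsto; fun_prop
    simpa using hcont.mono_left nhdsWithin_le_nhds
  have h3 : ∀ᶠ t in nhdsWithin (0:ℝ) (Set.Ioi 0),
      μ / 2 * (1 - t) * ‖z - x‖ ^ 2 ≤ (F z - ⟪b, z⟫) - (F x - ⟪b, x⟫) := by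
    filter_upwards [Ioo_mem_nhdsGT_of_mem (by constructor <;> norm_num : (0:ℝ) ∈ Set.Ico 0 1)]
      with t ht using key t ht
  have := le_of_tendsto h2 h3
  linarith

end Aux

/-- Existence of a minimizer of `z ↦ F z - ⟪b, z⟫` for strongly convex `F`. -/
private lemma exists_min {N : ℕ} {μ : ℝ} (hμ : 0 < μ)
    {F : EuclideanSpace ℝ (Fin N) → ℝ}
    (hF : ConvexOn ℝ Set.univ (fun z => F z - μ / 2 * ‖z‖ ^ 2))
    (b : EuclideanSpace ℝ (Fin N)) :
    ∃ x, ∀ z, F x - ⟪b, x⟫ ≤ F z - ⟪b, z⟫ := by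
  obtain ⟨g, hg⟩ : ∃ g : EuclideanSpace ℝ (Fin N) → ℝ,
      g = fun z => F z - μ / 2 * ‖z‖ ^ 2 := ⟨_, rfl⟩
  have hFg : ∀ z, F z = g z + μ / 2 * ‖z‖ ^ 2 := by intro z; rw [hg]; ring
  have hFconv : ConvexOn ℝ Set.univ g := by rw [hg]; exact hF
  have hgc : Continuous g := by
    rw [hg, ← continuousOn_univ]
    exact hF.continuousOn isOpen_univ
  have hFc : Continuous F := by
    have : Continuous fun z : EuclideanSpace ℝ (Fin N) => g z + μ / 2 * ‖z‖ ^ 2 := by fun_prop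
    have he : F = fun z => g z + μ / 2 * ‖z‖ ^ 2 := funext hFg
    rw [he]; exact this
  obtain ⟨m0, hm0mem, hm0⟩ :=
    (isCompact_closedBall (0:EuclideanSpace ℝ (Fin N)) 1).exists_isMinOn ⟨0, by simp⟩ hgc.continuousOn
  obtain ⟨C, hC⟩ : ∃ C : ℝ, C = |g m0 - g 0| := ⟨_, rfl⟩
  have hlow : ∀ z : EuclideanSpace ℝ (Fin N), 1 ≤ ‖z‖ → -C * ‖z‖ + g 0 ≤ g z := by
    intro z hR
    have hRpos : (0:ℝ) < ‖z‖ := lt_of_lt_of_le one_pos hR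
    have ha : (0:ℝ) ≤ 1 / ‖z‖ := by positivity
    have hb : (0:ℝ) ≤ 1 - 1 / ‖z‖ := by
      have : 1 / ‖z‖ ≤ 1 := by rw [div_le_one hRpos]; exact hR
      linarith
    have hconv' := hFconv.2 (Set.mem_univ z) (Set.mem_univ (0:EuclideanSpace ℝ (Fin N))) ha hb (by ring)
    simp only [smul_zero, add_zero, smul_eq_mul] at hconv'
    have hmem : (1 / ‖z‖) • z ∈ Metric.closedBall (0:EuclideanSpace ℝ (Fin N)) 1 := by
      rw [Metric.mem_closedBall, dist_zero_right, norm_smul, Real.norm_eq_abs,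
        abs_of_nonneg ha, one_div, inv_mul_cancel₀ hRpos.ne']
    have hmin : g m0 ≤ g ((1 / ‖z‖) • z) := hm0 hmem
    have h6 : ‖z‖ * g m0 ≤ ‖z‖ * (1 / ‖z‖ * g z + (1 - 1 / ‖z‖) * g 0) :=
      mul_le_mul_of_nonneg_left (le_trans hmin hconv') hRpos.le
    have h7 : ‖z‖ * (1 / ‖z‖ * g z + (1 - 1 / ‖z‖) * g 0)
        = g z + (‖z‖ - 1) * g 0 := by
      field_simp
    have h8 : ‖z‖ * (-C) ≤ ‖z‖ * (g m0 - g 0) := by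
      rw [hC]; exact mul_le_mul_of_nonneg_left (neg_abs_le _) hRpos.le
    rw [h7] at h6
    have h9 : ‖z‖ * (g m0 - g 0) = ‖z‖ * g m0 - ‖z‖ * g 0 := by ring
    have h10 : (‖z‖ - 1) * g 0 = ‖z‖ * g 0 - g 0 := by ring
    linarith [h6, h8, h9, h10]
  have hnorm : Filter.Tendsto (fun z : EuclideanSpace ℝ (Fin N) => ‖z‖)
      (Filter.cocompact (EuclideanSpace ℝ (Fin N))) Filter.atTop :=
    tendsto_norm_cocompact_atTop
  have hpoly : Filter.Tendsto (fun R : ℝ => μ / 2 * R ^ 2 - (C + ‖b‖) * R + g 0)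
      Filter.atTop Filter.atTop := by
    have h1 : Filter.Tendsto (fun R : ℝ => μ / 2 * R - (C + ‖b‖)) Filter.atTop Filter.atTop := by
      apply Filter.tendsto_atTop_add_const_right
      exact Filter.Tendsto.const_mul_atTop (by positivity) Filter.tendsto_id
    have h2 : Filter.Tendsto (fun R : ℝ => R * (μ / 2 * R - (C + ‖b‖)) + g 0)
        Filter.atTop Filter.atTop := by
      apply Filter.tendsto_atTop_add_const_right
      exact Filter.Tendsto.atTop_mul_atTop₀ Filter.tendsto_id h1
    convert h2 using 2 with R
    ring
  have hco : Filter.Tendsto (fun z : EuclideanSpace ℝ (Fin N) => F z - ⟪b, z⟫)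
      (Filter.cocompact (EuclideanSpace ℝ (Fin N))) Filter.atTop := by
    apply Filter.tendsto_atTop_mono' (Filter.cocompact (EuclideanSpace ℝ (Fin N))) _ (hpoly.comp hnorm)
    filter_upwards [hnorm.eventually_ge_atTop 1] with z hz
    have h1 := hlow z hz
    have hcs : ⟪b, z⟫ ≤ ‖b‖ * ‖z‖ := real_inner_le_norm b z
    have hFe : F z = g z + μ / 2 * ‖z‖ ^ 2 := hFg z
    simp only [Function.comp]
    have h11 : (C + ‖b‖) * ‖z‖ = C * ‖z‖ + ‖b‖ * ‖z‖ := by ring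
    have h12 : -C * ‖z‖ = -(C * ‖z‖) := by ring
    linarith [h1, hcs, hFe, h11, h12]
  have hne : Nonempty (EuclideanSpace ℝ (Fin N)) := ⟨0⟩
  have hcontf : Continuous fun z : EuclideanSpace ℝ (Fin N) => F z - ⟪b, z⟫ := by
    apply hFc.sub
    exact Continuous.inner continuous_const continuous_id
  exact hcontf.exists_forall_le hco

/-- For a μ-strongly convex `F` and the dual objective
`φ(η) = sup_z (⟪S η, z⟫ − F z)` (finite everywhere), if `x` attains the
supremum defining `φ(η)`, `x*` minimizes `F` over `{z : S z = 0}`, and `η*`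
minimizes `φ`, then `‖x − x*‖² ≤ (2/μ)(φ(η) − φ(η*))`. -/
theorem dual_suboptimality_bounds_primal_distance (N : ℕ) (hN : 0 < N)
    (W S : Matrix (Fin N) (Fin N) ℝ)
    (hW : W.PosSemidef) (hS : S.PosSemidef) (hSS : S * S = W)
    (μ : ℝ) (hμ : 0 < μ)
    (F : EuclideanSpace ℝ (Fin N) → ℝ)
    (hF : ConvexOn ℝ Set.univ (fun z => F z - μ / 2 * ‖z‖ ^ 2))
    (φ : EuclideanSpace ℝ (Fin N) → ℝ)
    (hφ : ∀ ξ, IsLUB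
      (Set.range fun z => ⟪Matrix.toEuclideanLin S ξ, z⟫ - F z) (φ ξ))
    (η x xstar ηstar : EuclideanSpace ℝ (Fin N))
    (hx : ⟪Matrix.toEuclideanLin S η, x⟫ - F x = φ η)
    (hxstar_feas : Matrix.toEuclideanLin S xstar = 0)
    (hxstar_min : ∀ z, Matrix.toEuclideanLin S z = 0 → F xstar ≤ F z)
    (hηstar : ∀ ξ, φ ηstar ≤ φ ξ) :
    ‖x - xstar‖ ^ 2 ≤ 2 / μ * (φ η - φ ηstar) := by
  set T := Matrix.toEuclideanLin S with hT
  have hsym : ∀ a c : EuclideanSpace ℝ (Fin N), ⟪T a, c⟫ = ⟪a, T c⟫ :=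
    Matrix.isHermitian_iff_isSymmetric.mp hS.1
  -- Part A: x minimizes z ↦ F z - ⟪T η, z⟫
  have hxmin : ∀ z, F x - ⟪T η, x⟫ ≤ F z - ⟪T η, z⟫ := by
    intro z
    have h1 : ⟪T η, z⟫ - F z ≤ φ η := (hφ η).1 ⟨z, rfl⟩
    linarith [hx]
  have hA := strong_min hμ F (T η) hF hxmin xstar
  have hTx0 : ⟪T η, xstar⟫ = 0 := by
    rw [hsym, hxstar_feas, inner_zero_right]
  -- Part B: minimizer for ηstar and its feasibility
  obtain ⟨xh, hxh⟩ := exists_min hμ hF (T ηstar)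
  have hphis : φ ηstar = ⟪T ηstar, xh⟫ - F xh := by
    apply le_antisymm
    · apply (hφ ηstar).2
      rintro w ⟨z, rfl⟩
      simp only
      linarith [hxh z]
    · exact (hφ ηstar).1 ⟨xh, rfl⟩
  have hTxh : T xh = 0 := by
    have hkey : ∀ v : EuclideanSpace ℝ (Fin N), 0 ≤ ⟪T v, xh⟫ := by
      intro v
      have hstep : ∀ t : ℝ, 0 < t → -(t * (‖T v‖ ^ 2 / μ)) ≤ ⟪T v, xh⟫ := by
        intro t ht
        obtain ⟨y, hy⟩ := exists_min hμ hF (T (ηstar + t • v))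
        have hTlin : T (ηstar + t • v) = T ηstar + t • T v := by
          rw [map_add, map_smul]
        have hphit : φ (ηstar + t • v) = ⟪T (ηstar + t • v), y⟫ - F y := by
          apply le_antisymm
          · apply (hφ _).2
            rintro w ⟨z, rfl⟩
            simp only
            linarith [hy z]
          · exact (hφ _).1 ⟨y, rfl⟩
        have h1 : φ ηstar ≤ φ (ηstar + t • v) := hηstar _
        have h2 : ⟪T ηstar, y⟫ - F y ≤ φ ηstar := (hφ ηstar).1 ⟨y, rfl⟩
        have hin : ⟪T (ηstar + t • v), y⟫ = ⟪T ηstar, y⟫ + t * ⟪T v, y⟫ := by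
          rw [hTlin, inner_add_left, real_inner_smul_left]
        have h3 : 0 ≤ t * ⟪T v, y⟫ := by
          rw [hphit, hin] at h1; linarith
        have hs1 := strong_min hμ F (T ηstar) hF hxh y
        have hs2 := strong_min hμ F (T (ηstar + t • v)) hF hy xh
        have hin2 : ⟪T (ηstar + t • v), xh⟫ = ⟪T ηstar, xh⟫ + t * ⟪T v, xh⟫ := by
          rw [hTlin, inner_add_left, real_inner_smul_left]
        have hnrev : ‖xh - y‖ = ‖y - xh‖ := norm_sub_rev _ _
        rw [hin2, hin, hnrev] at hs2
        have hsum : μ * ‖y - xh‖ ^ 2 ≤ t * ⟪T v, y⟫ - t * ⟪T v, xh⟫ := by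
          linarith [hs1, hs2]
        have hid : ⟪T v, y⟫ - ⟪T v, xh⟫ = ⟪T v, y - xh⟫ := (inner_sub_right _ _ _).symm
        have hcs : ⟪T v, y - xh⟫ ≤ ‖T v‖ * ‖y - xh‖ := real_inner_le_norm _ _
        have hd : ‖y - xh‖ ≤ t * ‖T v‖ / μ := by
          rcases eq_or_lt_of_le (norm_nonneg (y - xh)) with h0 | h0
          · rw [← h0]; positivity
          · have hsum2 : μ * ‖y - xh‖ ^ 2 ≤ t * (‖T v‖ * ‖y - xh‖) := by
              have he : t * ⟪T v, y⟫ - t * ⟪T v, xh⟫ = t * ⟪T v, y - xh⟫ := by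
                rw [← hid]; ring
              have h' : t * ⟪T v, y - xh⟫ ≤ t * (‖T v‖ * ‖y - xh‖) :=
                mul_le_mul_of_nonneg_left hcs ht.le
              linarith [hsum]
            rw [le_div_iff₀ hμ]
            nlinarith [hsum2, h0]
        have h4 : 0 ≤ ⟪T v, y⟫ := by nlinarith [h3, ht]
        have h5 : ⟪T v, y⟫ - ‖T v‖ * ‖y - xh‖ ≤ ⟪T v, xh⟫ := by
          have hcs2 : ⟪T v, y - xh⟫ ≤ ‖T v‖ * ‖y - xh‖ := real_inner_le_norm _ _
          rw [inner_sub_right] at hcs2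
          linarith
        have h7 : ‖T v‖ * (t * ‖T v‖ / μ) = t * (‖T v‖ ^ 2 / μ) := by ring
        nlinarith [h5, h4, hd, norm_nonneg (T v)]
      by_contra hneg
      push_neg at hneg
      set c : ℝ := ‖T v‖ ^ 2 / μ with hc
      have hc0 : 0 ≤ c := by positivity
      rcases eq_or_lt_of_le hc0 with h0 | h0
      · have h1' := hstep 1 one_pos
        have h2' : -(1 * c) = 0 := by rw [← h0]; ring
        linarith [h1', h2', hneg]
      · have htpos : 0 < -⟪T v, xh⟫ / (2 * c) := by
          apply div_pos (by linarith) (by linarith)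
        have hb := hstep _ htpos
        have hx2 : -⟪T v, xh⟫ / (2 * c) * c = -⟪T v, xh⟫ / 2 := by
          field_simp
        rw [hx2] at hb
        linarith
    have hzero : ∀ v, ⟪T v, xh⟫ = 0 := by
      intro v
      have h1 := hkey v
      have h2 := hkey (-v)
      rw [map_neg, inner_neg_left] at h2
      linarith
    have hself : ⟪T xh, T xh⟫ = 0 := by
      have h := hzero (T xh)
      rwa [hsym] at h
    exact inner_self_eq_zero.mp hself
  have hfeas2 : F xstar ≤ F xh := hxstar_min xh hTxh
  have hphistar : φ ηstar = -F xh := by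
    rw [hphis, hsym, hTxh, inner_zero_right]; ring
  have hfin : μ / 2 * ‖x - xstar‖ ^ 2 ≤ φ η - φ ηstar := by
    have hrev : ‖xstar - x‖ = ‖x - xstar‖ := norm_sub_rev _ _
    rw [hrev] at hA
    rw [hphistar]
    linarith [hA, hTx0, hx, hfeas2]
  calc ‖x - xstar‖ ^ 2 = 2 / μ * (μ / 2 * ‖x - xstar‖ ^ 2) := by
        field_simp
    _ ≤ 2 / μ * (φ η - φ ηstar) := by
        apply mul_le_mul_of_nonneg_left hfin (by positivity)
end

section
/- Let n be a positive integer, β > 0, and c : Fin n → ℝ. Define the softmax map p : ℝ^n → ℝ^n by p(η)_l = exp((η_l − c_l)/β) / Σ_{l'=1}^n exp((η_{l'} − c_{l'})/β). Then p is (1/β)-Lipschitz with respect to the Euclidean norm: for all η₁, η₂ ∈ ℝ^n, ‖p(η₁) − p(η₂)‖ ≤ (1/β)‖η₁ − η₂‖. Consequently the log-sum-exp function f(η) = β log Σ_l exp((η_l − c_l)/β), whose gradient is p, is (1/β)-smooth. -/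
set_option maxHeartbeats 1000000

open Finset Real

lemma cov_bound {n : ℕ} (q u v : Fin n → ℝ) (hq0 : ∀ l, 0 ≤ q l) (hq1 : ∀ l, q l ≤ 1)
    (hsum : ∑ l, q l = 1) :
    |(∑ l, q l * (u l * v l)) - (∑ l, q l * u l) * (∑ l, q l * v l)|
      ≤ Real.sqrt (∑ l, u l ^ 2) * Real.sqrt (∑ l, v l ^ 2) := by
  set ub := ∑ l, q l * u l with hub
  set vb := ∑ l, q l * v l with hvb
  have expand : ∀ (a : Fin n → ℝ) (ab : ℝ), (∑ l, q l * a l) = ab →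
      ∑ l, q l * ((a l - ab) ^ 2) = (∑ l, q l * a l ^ 2) - ab ^ 2 := by
    intro a ab hab
    have : ∀ l, q l * ((a l - ab) ^ 2)
        = q l * a l ^ 2 - (2 * ab) * (q l * a l) + (ab ^ 2) * q l := by intro l; ring
    rw [Finset.sum_congr rfl fun l _ => this l]
    rw [Finset.sum_add_distrib, Finset.sum_sub_distrib, ← Finset.mul_sum, ← Finset.mul_sum,
      hab, hsum]
    ring
  have expand2 : ∑ l, q l * ((u l - ub) * (v l - vb))
      = (∑ l, q l * (u l * v l)) - ub * vb := by
    have : ∀ l, q l * ((u l - ub) * (v l - vb))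
        = q l * (u l * v l) - vb * (q l * u l) - ub * (q l * v l) + (ub * vb) * q l := by
      intro l; ring
    rw [Finset.sum_congr rfl fun l _ => this l]
    rw [Finset.sum_add_distrib, Finset.sum_sub_distrib, Finset.sum_sub_distrib,
      ← Finset.mul_sum, ← Finset.mul_sum, ← Finset.mul_sum, ← hub, ← hvb, hsum]
    ring
  rw [← expand2]
  have cs : (∑ l, q l * ((u l - ub) * (v l - vb))) ^ 2
      ≤ (∑ l, q l * (u l - ub) ^ 2) * (∑ l, q l * (v l - vb) ^ 2) := by
    have := Finset.sum_mul_sq_le_sq_mul_sq Finset.univ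
      (fun l => Real.sqrt (q l) * (u l - ub)) (fun l => Real.sqrt (q l) * (v l - vb))
    calc (∑ l, q l * ((u l - ub) * (v l - vb))) ^ 2
        = (∑ l, (Real.sqrt (q l) * (u l - ub)) * (Real.sqrt (q l) * (v l - vb))) ^ 2 := by
          congr 1; refine Finset.sum_congr rfl fun l _ => ?_
          rw [show (Real.sqrt (q l) * (u l - ub)) * (Real.sqrt (q l) * (v l - vb))
            = (Real.sqrt (q l) * Real.sqrt (q l)) * ((u l - ub) * (v l - vb)) by ring,
            Real.mul_self_sqrt (hq0 l)]
      _ ≤ (∑ l, (Real.sqrt (q l) * (u l - ub)) ^ 2) * (∑ l, (Real.sqrt (q l) * (v l - vb)) ^ 2) :=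
          this
      _ = (∑ l, q l * (u l - ub) ^ 2) * (∑ l, q l * (v l - vb) ^ 2) := by
          congr 1 <;> refine Finset.sum_congr rfl fun l _ => ?_ <;>
            rw [mul_pow, Real.sq_sqrt (hq0 l)]
  have hA : ∑ l, q l * (u l - ub) ^ 2 ≤ ∑ l, u l ^ 2 := by
    rw [expand u ub hub.symm]
    have h1 : ∑ l, q l * u l ^ 2 ≤ ∑ l, u l ^ 2 :=
      Finset.sum_le_sum fun l _ => by nlinarith [sq_nonneg (u l), hq1 l, hq0 l]
    nlinarith [sq_nonneg ub]
  have hB : ∑ l, q l * (v l - vb) ^ 2 ≤ ∑ l, v l ^ 2 := by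
    rw [expand v vb hvb.symm]
    have h1 : ∑ l, q l * v l ^ 2 ≤ ∑ l, v l ^ 2 :=
      Finset.sum_le_sum fun l _ => by nlinarith [sq_nonneg (v l), hq1 l, hq0 l]
    nlinarith [sq_nonneg vb]
  have hAnn : (0:ℝ) ≤ ∑ l, q l * (u l - ub) ^ 2 :=
    Finset.sum_nonneg fun l _ => mul_nonneg (hq0 l) (sq_nonneg _)
  have hBnn : (0:ℝ) ≤ ∑ l, q l * (v l - vb) ^ 2 :=
    Finset.sum_nonneg fun l _ => mul_nonneg (hq0 l) (sq_nonneg _)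
  have : |∑ l, q l * ((u l - ub) * (v l - vb))|
      ≤ Real.sqrt ((∑ l, q l * (u l - ub) ^ 2) * (∑ l, q l * (v l - vb) ^ 2)) := by
    rw [← Real.sqrt_sq_eq_abs]
    exact Real.sqrt_le_sqrt cs
  refine this.trans ?_
  rw [Real.sqrt_mul hAnn]
  exact mul_le_mul (Real.sqrt_le_sqrt hA) (Real.sqrt_le_sqrt hB) (Real.sqrt_nonneg _)
    (Real.sqrt_nonneg _)

/-- For β > 0 and costs `c`, the softmax map
`p(η)_l = exp((η_l − c_l)/β) / Σ_{l'} exp((η_{l'} − c_{l'})/β)` is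
(1/β)-Lipschitz in the Euclidean norm:
`‖p(η₁) − p(η₂)‖ ≤ (1/β) ‖η₁ − η₂‖` for all `η₁, η₂`. -/
theorem softmax_lipschitz (n : ℕ) (hn : 0 < n)
    (β : ℝ) (hβ : 0 < β) (c : Fin n → ℝ)
    (p : EuclideanSpace ℝ (Fin n) → EuclideanSpace ℝ (Fin n))
    (hp : ∀ (η : EuclideanSpace ℝ (Fin n)) (l : Fin n),
      p η l = Real.exp ((η l - c l) / β) /
        ∑ l', Real.exp ((η l' - c l') / β)) :
    ∀ η₁ η₂ : EuclideanSpace ℝ (Fin n),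
      ‖p η₁ - p η₂‖ ≤ 1 / β * ‖η₁ - η₂‖ := by
  intro η₁ η₂
  haveI : Nonempty (Fin n) := ⟨⟨0, hn⟩⟩
  set v : Fin n → ℝ := fun l => η₁ l - η₂ l with hv
  set u : Fin n → ℝ := fun l => p η₁ l - p η₂ l with hu
  set E : ℝ → Fin n → ℝ := fun t l => Real.exp ((η₂ l + t * v l - c l) / β) with hE
  set S : ℝ → ℝ := fun t => ∑ l, E t l with hSdef
  have hSpos : ∀ t, 0 < S t := fun t =>
    Finset.sum_pos (fun l _ => Real.exp_pos _) Finset.univ_nonempty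
  set Q : ℝ → Fin n → ℝ := fun t l => E t l / S t with hQ
  set g : ℝ → ℝ := fun t => ∑ l, u l * Q t l with hg
  set G : ℝ → ℝ := fun t => (1 / β) *
    ((∑ l, Q t l * (u l * v l)) - (∑ l, Q t l * u l) * (∑ l, Q t l * v l)) with hG
  -- derivative of g
  have hderiv : ∀ t : ℝ, HasDerivAt g (G t) t := by
    intro t
    have hw : ∀ l, HasDerivAt (fun s => (η₂ l + s * v l - c l) / β) (v l / β) t := by
      intro l
      have h1 : HasDerivAt (fun s : ℝ => η₂ l + s * v l - c l) (v l) t := by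
        simpa using (((hasDerivAt_mul_const (v l)) : HasDerivAt (fun s : ℝ => s * v l) (v l) t
          ).const_add (η₂ l)).sub_const (c l)
      exact h1.div_const β
    have hEd : ∀ l, HasDerivAt (fun s => E s l) (E t l * (v l / β)) t := fun l =>
      (hw l).exp
    have hSd : HasDerivAt S (∑ k, E t k * (v k / β)) t :=
      HasDerivAt.fun_sum fun k _ => hEd k
    have hterm : ∀ l, HasDerivAt (fun s => u l * Q s l)
        (u l * ((E t l * (v l / β) * S t - E t l * (∑ k, E t k * (v k / β))) / (S t) ^ 2)) t := by
      intro l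
      exact ((hEd l).div hSd (ne_of_gt (hSpos t))).const_mul (u l)
    have hsum : HasDerivAt g
        (∑ l, u l * ((E t l * (v l / β) * S t - E t l * (∑ k, E t k * (v k / β))) / (S t) ^ 2)) t :=
      HasDerivAt.fun_sum fun l _ => hterm l
    convert hsum using 1
    have hSne : S t ≠ 0 := ne_of_gt (hSpos t)
    have hQv : ∑ k, Q t k * v k = (∑ k, E t k * v k) / S t := by
      rw [Finset.sum_div]
      exact Finset.sum_congr rfl fun k _ => by rw [hQ]; field_simp
    have htermeq : ∀ l,
        u l * ((E t l * (v l / β) * S t - E t l * (∑ k, E t k * (v k / β))) / (S t) ^ 2)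
        = (1 / β) * (Q t l * (u l * v l)) - (Q t l * u l) * ((1 / β) * ∑ k, Q t k * v k) := by
      intro l
      rw [hQv]
      have hsum2 : ∑ k, E t k * (v k / β) = (∑ k, E t k * v k) / β := by
        rw [Finset.sum_div]; exact Finset.sum_congr rfl fun k _ => by ring
      rw [hsum2, hQ]
      field_simp
    rw [Finset.sum_congr rfl fun l _ => htermeq l, Finset.sum_sub_distrib,
      ← Finset.sum_mul, ← Finset.mul_sum, hG]
    ring
  -- MVT
  obtain ⟨ξ, _, hslope⟩ := exists_hasDerivAt_eq_slope g G (by norm_num : (0:ℝ) < 1)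
    (fun x _ => (hderiv x).continuousAt.continuousWithinAt) (fun x _ => hderiv x)
  -- endpoint values
  have hE1 : ∀ k, E 1 k = Real.exp ((η₁ k - c k) / β) := by
    intro k
    simp only [hE, hv]
    congr 1
    ring
  have hE0 : ∀ k, E 0 k = Real.exp ((η₂ k - c k) / β) := by
    intro k
    simp only [hE]
    norm_num
  have hQ1 : ∀ l, Q 1 l = p η₁ l := by
    intro l
    rw [hp η₁ l]
    simp only [hQ, hSdef, hE1]
  have hQ0 : ∀ l, Q 0 l = p η₂ l := by
    intro l
    rw [hp η₂ l]
    simp only [hQ, hSdef, hE0]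
  have hg10 : g 1 - g 0 = ∑ l, u l ^ 2 := by
    rw [hg]
    simp only
    rw [← Finset.sum_sub_distrib]
    refine Finset.sum_congr rfl fun l _ => ?_
    rw [hQ1 l, hQ0 l, hu]
    ring
  -- properties of Q ξ
  have hq0 : ∀ l, 0 ≤ Q ξ l := fun l => div_nonneg (Real.exp_pos _).le (hSpos ξ).le
  have hq1 : ∀ l, Q ξ l ≤ 1 := by
    intro l
    rw [hQ, div_le_one (hSpos ξ)]
    exact Finset.single_le_sum (f := fun k => E ξ k)
      (fun k _ => le_of_lt (Real.exp_pos _)) (Finset.mem_univ l)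
  have hqsum : ∑ l, Q ξ l = 1 := by
    simp only [hQ]
    rw [← Finset.sum_div]
    exact div_self (ne_of_gt (hSpos ξ))
  -- norms
  have hnu : ‖p η₁ - p η₂‖ = Real.sqrt (∑ l, u l ^ 2) := by
    rw [EuclideanSpace.norm_eq]
    congr 1
    refine Finset.sum_congr rfl fun l _ => ?_
    rw [hu]
    simp [PiLp.sub_apply, sq_abs]
  have hnv : ‖η₁ - η₂‖ = Real.sqrt (∑ l, v l ^ 2) := by
    rw [EuclideanSpace.norm_eq]
    congr 1
    refine Finset.sum_congr rfl fun l _ => ?_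
    rw [hv]
    simp [PiLp.sub_apply, sq_abs]
  -- main bound
  have hGbound : |G ξ| ≤ 1 / β * (Real.sqrt (∑ l, u l ^ 2) * Real.sqrt (∑ l, v l ^ 2)) := by
    rw [hG]
    rw [abs_mul, abs_of_pos (by positivity : (0:ℝ) < 1 / β)]
    exact mul_le_mul_of_nonneg_left (cov_bound (Q ξ) u v hq0 hq1 hqsum) (by positivity)
  have key : (∑ l, u l ^ 2) ≤ 1 / β * (Real.sqrt (∑ l, u l ^ 2) * Real.sqrt (∑ l, v l ^ 2)) := by
    calc (∑ l, u l ^ 2) = g 1 - g 0 := hg10.symm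
      _ = G ξ := by rw [hslope]; ring
      _ ≤ |G ξ| := le_abs_self _
      _ ≤ _ := hGbound
  rw [hnu, hnv]
  rcases eq_or_lt_of_le (Real.sqrt_nonneg (∑ l, u l ^ 2)) with h0 | h0
  · rw [← h0]
    positivity
  · have hsq : Real.sqrt (∑ l, u l ^ 2) ^ 2 = ∑ l, u l ^ 2 :=
      Real.sq_sqrt (Finset.sum_nonneg fun l _ => sq_nonneg _)
    nlinarith [key, h0]
end
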